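/- arXiv:1501.06311 — 2 statements merged into one kernel-verified Lean document; each statement's English description precedes it below -/
import Mathlib

section
/- Let S : ℝ^d → V(m) be measurable, Q a cube partitioned into measurable sets A₁,…,A_N with η := min_j |A_j|/|Q| > 0. Suppose there exists δ > 0 such that for each j, each x ∈ A_j and each v ∈ S(x), there is k ≠ j with |⟨v,w⟩| ≤ (1−δ)|v||w| for all w ∈ S(y) and all y ∈ A_k. Then ω(Q,S) ≥ sqrt(δη). -/
/-! Let `a` be the average over `Q` of a unit section `u`. Because `|u| = 1`, the mean square
deviation of `u` from `a` is `1 - |a|²`, and `|a|² = ⨍ Re ⟨u y, a⟩ dy`. For `y ∈ A_j` the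
hypothesis provides a block `A_k`, of relative measure at least `η`, on which
`|⟨u y, u z⟩| ≤ 1 - δ`, while `|⟨u y, u z⟩| ≤ 1` elsewhere; averaging over `z` gives
`Re ⟨u y, a⟩ ≤ 1 - δη`, hence `|a|² ≤ 1 - δη`. Unit sections exist since the first
nonvanishing spanning field of `S` can be selected measurably. -/

open MeasureTheory

noncomputable instance {m : ℕ} : MeasurableSpace (EuclideanSpace ℂ (Fin m)) := borel _
instance {m : ℕ} : BorelSpace (EuclideanSpace ℂ (Fin m)) := ⟨rfl⟩

/-- The axis-parallel cube in `ℝ^d` with lower corner `x` and side length `ℓ`. -/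
def Cube {d : ℕ} (x : Fin d → ℝ) (ℓ : ℝ) : Set (Fin d → ℝ) :=
  {y | ∀ i, y i ∈ Set.Icc (x i) (x i + ℓ)}

/-- A subspace-valued mapping `S : ℝ^d → V(m)` is measurable if it is spanned pointwise by
finitely many measurable vector-valued functions. -/
def MeasSubspaceMap {d m : ℕ}
    (S : (Fin d → ℝ) → Submodule ℂ (EuclideanSpace ℂ (Fin m))) : Prop :=
  ∃ (k : ℕ) (v : Fin k → (Fin d → ℝ) → EuclideanSpace ℂ (Fin m)),
    (∀ i, Measurable (v i)) ∧ ∀ x, S x = Submodule.span ℂ (Set.range fun i => v i x)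

/-- The unit sections of `S` on `Q`: measurable `v` with `v(x) ∈ S(x)` and `|v(x)| = 1`
a.e. on `Q`. -/
def unitSections {d m : ℕ} (Q : Set (Fin d → ℝ))
    (S : (Fin d → ℝ) → Submodule ℂ (EuclideanSpace ℂ (Fin m))) :
    Set ((Fin d → ℝ) → EuclideanSpace ℂ (Fin m)) :=
  {v | Measurable v ∧ ∀ᵐ x ∂(volume.restrict Q), v x ∈ S x ∧ ‖v x‖ = 1}

/-- The average `(1/|Q|) ∫_Q v`. -/
noncomputable def avg {d m : ℕ} (Q : Set (Fin d → ℝ))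
    (v : (Fin d → ℝ) → EuclideanSpace ℂ (Fin m)) : EuclideanSpace ℂ (Fin m) :=
  (volume Q).toReal⁻¹ • ∫ y in Q, v y

/-- The oscillation `ω(Q,S)` of a subspace-valued mapping on a cube. -/
noncomputable def osc {d m : ℕ} (Q : Set (Fin d → ℝ))
    (S : (Fin d → ℝ) → Submodule ℂ (EuclideanSpace ℂ (Fin m))) : ℝ :=
  sInf ((fun v => Real.sqrt ((volume Q).toReal⁻¹ * ∫ y in Q, ‖v y - avg Q v‖ ^ 2)) ''
    unitSections Q S)

open ProbabilityTheory

section MeasurableSelection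

variable {𝕜 α E : Type*} [RCLike 𝕜] [MeasurableSpace α] [NormedAddCommGroup E] [NormedSpace 𝕜 E]
  [MeasurableSpace E] [BorelSpace E] [SecondCountableTopology E]

theorem exists_measurable_unit_mem_span_singleton (v : ℕ → α → E) (hv : ∀ n, Measurable (v n))
    (hne : ∀ y, ∃ n, v n y ≠ 0) :
    ∃ u : α → E, Measurable u ∧ ∀ y, (∃ n, u y ∈ 𝕜 ∙ v n y) ∧ ‖u y‖ = 1 := by
  classical
  set w : α → E := fun y => v (Nat.find (hne y)) y
  have hw : Measurable w :=
    Measurable.find hv (fun n => (hv n) (measurableSet_singleton 0).compl) hne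
  refine ⟨fun y => (‖w y‖⁻¹ : 𝕜) • w y, ?_, fun y => ⟨⟨_, Submodule.smul_mem _ _
    (Submodule.mem_span_singleton_self _)⟩, norm_smul_inv_norm (Nat.find_spec (hne y))⟩⟩
  exact (RCLike.measurable_ofReal.comp hw.norm).inv.smul hw

end MeasurableSelection

theorem MeasSubspaceMap.exists_measurable_unit_section {d m : ℕ}
    {S : (Fin d → ℝ) → Submodule ℂ (EuclideanSpace ℂ (Fin m))} (hS : MeasSubspaceMap S)
    (hnt : ∀ y, S y ≠ ⊥) :
    ∃ u : (Fin d → ℝ) → EuclideanSpace ℂ (Fin m), Measurable u ∧ ∀ y, u y ∈ S y ∧ ‖u y‖ = 1 := by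
  classical
  obtain ⟨k, v, hv, hspan⟩ := hS
  set v' : ℕ → (Fin d → ℝ) → EuclideanSpace ℂ (Fin m) :=
    fun n y => if h : n < k then v ⟨n, h⟩ y else 0
  have hv'S : ∀ n y, v' n y ∈ S y := by
    intro n y
    by_cases h : n < k
    · rw [hspan y]
      simpa [v', h] using
        Submodule.subset_span (R := ℂ) (Set.mem_range_self (f := fun i => v i y) ⟨n, h⟩)
    · simp [v', h]
  have hne : ∀ y, ∃ n, v' n y ≠ 0 := by
    intro y
    by_contra! h
    refine hnt y ((hspan y).trans (Submodule.span_eq_bot.2 ?_))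
    rintro _ ⟨i, rfl⟩
    simpa [v'] using h i
  obtain ⟨u, hu, hu1⟩ := exists_measurable_unit_mem_span_singleton (𝕜 := ℂ) v'
    (fun n => by by_cases h : n < k <;> simp [v', h, hv]) hne
  refine ⟨u, hu, fun y => ⟨?_, (hu1 y).2⟩⟩
  obtain ⟨n, hn⟩ := (hu1 y).1
  exact (Submodule.span_singleton_le_iff_mem _ _).2 (hv'S n y) hn

section UnitVectorField

variable {α E : Type*} [MeasurableSpace α] {P : Measure α} [IsProbabilityMeasure P]
  [NormedAddCommGroup E] [NormedSpace ℝ E] [CompleteSpace E] {u : α → E}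

theorem integral_norm_sub_integral_sq_of_norm_eq_one (𝕜 : Type*) [RCLike 𝕜]
    [InnerProductSpace 𝕜 E] (hum : AEStronglyMeasurable u P)
    (hu : ∀ᵐ y ∂P, ‖u y‖ = 1) :
    ∫ y, ‖u y - ∫ z, u z ∂P‖ ^ 2 ∂P = 1 - ‖∫ z, u z ∂P‖ ^ 2 := by
  set a := ∫ z, u z ∂P
  have hint : Integrable u P := .of_bound hum 1 (hu.mono fun _ h => h.le)
  have hexpand : ∀ᵐ y ∂P, ‖u y - a‖ ^ 2 = 1 + ‖a‖ ^ 2 - 2 * RCLike.re (inner 𝕜 a (u y)) := by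
    filter_upwards [hu] with y hy
    rw [@norm_sub_sq 𝕜, hy, inner_re_symm]
    ring
  rw [integral_congr_ae hexpand, integral_sub (integrable_const _)
    ((hint.const_inner a).re.const_mul 2), integral_const_mul, integral_re (hint.const_inner a),
    integral_inner hint, inner_self_eq_norm_sq]
  simp only [integral_const, probReal_univ, one_smul]
  ring

variable {𝕜 : Type*} [RCLike 𝕜] [InnerProductSpace 𝕜 E]

local notation "⟪" x ", " y "⟫" => inner 𝕜 x y

theorem re_inner_integral_le_of_norm_inner_le (hum : AEStronglyMeasurable u P)
    (hu : ∀ᵐ y ∂P, ‖u y‖ = 1) {v : E} (hv : ‖v‖ ≤ 1) {B : Set α} (hB : MeasurableSet B) {δ : ℝ}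
    (hvB : ∀ᵐ z ∂P, z ∈ B → ‖⟪v, u z⟫‖ ≤ 1 - δ) :
    RCLike.re ⟪v, ∫ z, u z ∂P⟫ ≤ 1 - δ * P.real B := by
  have hint : Integrable u P := .of_bound hum 1 (hu.mono fun _ h => h.le)
  have hpt : ∀ᵐ z ∂P, RCLike.re ⟪v, u z⟫ ≤ 1 - δ * B.indicator 1 z := by
    filter_upwards [hu, hvB] with z hz hzB
    refine (RCLike.re_le_norm _).trans ?_
    by_cases hzB' : z ∈ B
    · simpa [hzB'] using hzB hzB'
    · simpa [hzB', hz] using (norm_inner_le_norm v (u z)).trans (by rw [hz, mul_one]; exact hv)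
  have hind : Integrable (fun z => δ * B.indicator 1 z) P :=
    ((integrable_const (1 : ℝ)).indicator hB).const_mul δ
  rw [← integral_inner hint, ← integral_re (hint.const_inner v)]
  refine (integral_mono_ae (hint.const_inner v).re ((integrable_const 1).sub hind) hpt).trans_eq ?_
  rw [Pi.sub_def, integral_sub (integrable_const 1) hind, integral_const_mul,
    integral_indicator_one hB]
  simp

theorem norm_integral_sq_le_of_re_inner_le (hint : Integrable u P) {c : ℝ}
    (h : ∀ᵐ y ∂P, RCLike.re ⟪u y, ∫ z, u z ∂P⟫ ≤ c) : ‖∫ z, u z ∂P‖ ^ 2 ≤ c := by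
  set a := ∫ z, u z ∂P
  calc ‖a‖ ^ 2 = RCLike.re ⟪a, a⟫ := (inner_self_eq_norm_sq a).symm
    _ = ∫ y, RCLike.re ⟪u y, a⟫ ∂P := by
      simp_rw [inner_re_symm _ a]
      rw [integral_re (hint.const_inner a), integral_inner hint]
    _ ≤ ∫ _, c ∂P := integral_mono_ae (hint.inner_const a).re (integrable_const c) h
    _ = c := by simp

end UnitVectorField

theorem ProbabilityTheory.integral_cond {α G : Type*} [MeasurableSpace α] [NormedAddCommGroup G]
    [NormedSpace ℝ G] (μ : Measure α) (s : Set α) (f : α → G) :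
    ∫ y, f y ∂μ[|s] = (μ s).toReal⁻¹ • ∫ y in s, f y ∂μ := by
  rw [cond, integral_smul_measure, ENNReal.toReal_inv]

theorem ProbabilityTheory.cond_real_apply_of_subset {α : Type*} [MeasurableSpace α]
    {μ : Measure α} {s t : Set α} (hs : MeasurableSet s) (hts : t ⊆ s) :
    μ[|s].real t = μ.real t / μ.real s := by
  rw [measureReal_def, cond_apply hs, Set.inter_eq_right.2 hts, ENNReal.toReal_mul,
    ENNReal.toReal_inv, div_eq_inv_mul, measureReal_def, measureReal_def]

theorem avg_eq_integral_cond {d m : ℕ} (Q : Set (Fin d → ℝ))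
    (v : (Fin d → ℝ) → EuclideanSpace ℂ (Fin m)) : avg Q v = ∫ y, v y ∂volume[|Q] :=
  (integral_cond _ _ _).symm

theorem cube_eq_pi {d : ℕ} (x : Fin d → ℝ) (ℓ : ℝ) :
    Cube x ℓ = Set.univ.pi fun i => Set.Icc (x i) (x i + ℓ) := by
  ext y
  exact ⟨fun h i _ => h i, fun h i => h i trivial⟩

theorem measurableSet_cube {d : ℕ} (x : Fin d → ℝ) (ℓ : ℝ) : MeasurableSet (Cube x ℓ) := by
  rw [cube_eq_pi]
  exact .univ_pi fun _ => measurableSet_Icc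

theorem volume_cube {d : ℕ} (x : Fin d → ℝ) (ℓ : ℝ) :
    volume (Cube x ℓ) = ENNReal.ofReal ℓ ^ d := by
  rw [cube_eq_pi, volume_pi_pi]
  simp [Real.volume_Icc]

theorem isProbabilityMeasure_cond_cube {d : ℕ} (x : Fin d → ℝ) {ℓ : ℝ} (hℓ : 0 < ℓ) :
    IsProbabilityMeasure volume[|Cube x ℓ] :=
  cond_isProbabilityMeasure_of_finite (by simp [volume_cube, hℓ]) (by simp [volume_cube])

theorem stmt_8_general {d m N : ℕ} (S : (Fin d → ℝ) → Submodule ℂ (EuclideanSpace ℂ (Fin m)))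
    (hS : MeasSubspaceMap S) (hnt : ∀ x, S x ≠ ⊥)
    (x : Fin d → ℝ) (ℓ : ℝ) (hℓ : 0 < ℓ)
    (A : Fin N → Set (Fin d → ℝ))
    (hAmeas : ∀ j, MeasurableSet (A j))
    (hAcover : (⋃ j, A j) = Cube x ℓ)
    (η : ℝ)
    (hηle : ∀ j, η ≤ (volume (A j)).toReal / (volume (Cube x ℓ)).toReal)
    (δ : ℝ) (hδ : 0 < δ)
    (hangle : ∀ j, ∀ y ∈ A j, ∀ v ∈ S y, ∃ k ≠ j, ∀ z ∈ A k, ∀ w ∈ S z,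
      ‖(inner ℂ v w : ℂ)‖ ≤ (1 - δ) * ‖v‖ * ‖w‖) :
    Real.sqrt (δ * η) ≤ osc (Cube x ℓ) S := by
  set Q := Cube x ℓ
  have := isProbabilityMeasure_cond_cube x hℓ
  obtain ⟨u₀, hu₀, hu₀S⟩ := hS.exists_measurable_unit_section hnt
  refine le_csInf ⟨_, u₀, ⟨hu₀, .of_forall hu₀S⟩, rfl⟩ ?_
  rintro _ ⟨u, ⟨hum, hu⟩, rfl⟩
  have hu' : ∀ᵐ y ∂volume[|Q], u y ∈ S y ∧ ‖u y‖ = 1 := Measure.ae_smul_measure hu _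
  have hu1 : ∀ᵐ y ∂volume[|Q], ‖u y‖ = 1 := hu'.mono fun _ h => h.2
  dsimp only
  rw [avg_eq_integral_cond, ← smul_eq_mul (a := (volume Q).toReal⁻¹), ← integral_cond,
    integral_norm_sub_integral_sq_of_norm_eq_one ℂ hum.aestronglyMeasurable hu1]
  refine Real.sqrt_le_sqrt ?_
  suffices ‖∫ y, u y ∂volume[|Q]‖ ^ 2 ≤ 1 - δ * η by linarith
  refine norm_integral_sq_le_of_re_inner_le (𝕜 := ℂ)
    (.of_bound hum.aestronglyMeasurable 1 (hu1.mono fun _ h => h.le)) ?_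
  filter_upwards [hu', ae_cond_mem (measurableSet_cube x ℓ)] with y hy hyQ
  obtain ⟨j, hyA⟩ := Set.mem_iUnion.1 (hAcover ▸ hyQ)
  obtain ⟨k, -, hk⟩ := hangle j y hyA (u y) hy.1
  calc RCLike.re (inner ℂ (u y) (∫ z, u z ∂volume[|Q]))
      ≤ 1 - δ * (volume[|Q]).real (A k) :=
        re_inner_integral_le_of_norm_inner_le hum.aestronglyMeasurable hu1 hy.2.le (hAmeas k)
          (hu'.mono fun z hz hzA => by simpa [hy.2, hz.2] using hk z hzA (u z) hz.1)
    _ ≤ 1 - δ * η := by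
        have hAQ : A k ⊆ Q := hAcover ▸ Set.subset_iUnion A k
        rw [cond_real_apply_of_subset (measurableSet_cube x ℓ) hAQ]
        gcongr
        exact hηle k

/-- Quantitative lower bound for the oscillation: if `Q` is partitioned into measurable
sets `A₁, …, A_N` each of relative measure at least `η`, and for each `j`, `x ∈ A_j`,
`v ∈ S(x)` there is `k ≠ j` with `|⟨v,w⟩| ≤ (1−δ)|v||w|` for all `w ∈ S(y)`, `y ∈ A_k`,
then `ω(Q,S) ≥ sqrt(δη)`. -/
theorem stmt_8 {d m N : ℕ} (S : (Fin d → ℝ) → Submodule ℂ (EuclideanSpace ℂ (Fin m)))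
    (hS : MeasSubspaceMap S) (hnt : ∀ x, S x ≠ ⊥)
    (x : Fin d → ℝ) (ℓ : ℝ) (hℓ : 0 < ℓ)
    (A : Fin N → Set (Fin d → ℝ))
    (hAmeas : ∀ j, MeasurableSet (A j))
    (hAdisj : Pairwise (Function.onFun Disjoint A))
    (hAcover : (⋃ j, A j) = Cube x ℓ)
    (η : ℝ) (hη : 0 < η)
    (hηle : ∀ j, η ≤ (volume (A j)).toReal / (volume (Cube x ℓ)).toReal)
    (δ : ℝ) (hδ : 0 < δ)
    (hangle : ∀ j, ∀ y ∈ A j, ∀ v ∈ S y, ∃ k ≠ j, ∀ z ∈ A k, ∀ w ∈ S z,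
      ‖(inner ℂ v w : ℂ)‖ ≤ (1 - δ) * ‖v‖ * ‖w‖) :
    Real.sqrt (δ * η) ≤ osc (Cube x ℓ) S :=
  stmt_8_general S hS hnt x ℓ hℓ A hAmeas hAcover η hηle δ hδ hangle
end

section
/- For every d, D ∈ ℕ there exists c > 0 such that: for every nonzero polynomial p in d real variables of degree ≤ D and every cube Q ⊆ ℝ^d, there is a subcube Q' ⊆ Q of side length c·ℓ_Q on which p has no zeros. -/
open MvPolynomial

section Cube

variable {d : ℕ}

lemma isCompact_cube (x : Fin d → ℝ) (ℓ : ℝ) : IsCompact (Cube x ℓ) := by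
  have : Cube x ℓ = Set.Icc x (fun i => x i + ℓ) := by ext; simp [Cube, Pi.le_def, forall_and]
  exact this ▸ isCompact_Icc

lemma mem_cube_add_smul_iff {x x' y : Fin d → ℝ} {ℓ c : ℝ} (hℓ : 0 < ℓ) :
    y ∈ Cube (x + ℓ • x') (c * ℓ) ↔ ℓ⁻¹ • (y - x) ∈ Cube x' c := by
  simp only [Cube, Set.mem_ofPred_eq, Set.mem_Icc, Pi.add_apply, Pi.smul_apply, Pi.sub_apply,
    smul_eq_mul]
  refine forall_congr' fun i => ?_
  rw [le_inv_mul_iff₀ hℓ, inv_mul_le_iff₀ hℓ]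
  constructor <;> rintro ⟨h₁, h₂⟩ <;> constructor <;> linarith

variable {x g : Fin d → ℝ} {ℓ c : ℝ}

lemma cube_shrink_subset (hg : g ∈ Cube x ℓ) (hc : c ≤ 1) :
    Cube (x + (1 - c) • (g - x)) (c * ℓ) ⊆ Cube x ℓ := by
  intro y hy i
  obtain ⟨hy₁, hy₂⟩ := hy i
  obtain ⟨hg₁, hg₂⟩ := hg i
  simp only [Pi.add_apply, Pi.smul_apply, Pi.sub_apply, smul_eq_mul] at hy₁ hy₂
  constructor <;> nlinarith

lemma dist_le_of_mem_cube_shrink (hg : g ∈ Cube x ℓ) (hℓ : 0 ≤ ℓ) (hc : 0 ≤ c)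
    {y : Fin d → ℝ} (hy : y ∈ Cube (x + (1 - c) • (g - x)) (c * ℓ)) : dist y g ≤ c * ℓ := by
  refine (dist_pi_le_iff (mul_nonneg hc hℓ)).2 fun i => ?_
  obtain ⟨hy₁, hy₂⟩ := hy i
  obtain ⟨hg₁, hg₂⟩ := hg i
  simp only [Pi.add_apply, Pi.smul_apply, Pi.sub_apply, smul_eq_mul] at hy₁ hy₂
  rw [Real.dist_eq, abs_sub_le_iff]
  constructor <;> nlinarith

end Cube

lemma exists_forall_dist_lt_imp_ne_zero {V X ι : Type*} [NormedAddCommGroup V]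
    [NormedSpace ℝ V] [FiniteDimensional ℝ V] [PseudoMetricSpace X] [Fintype ι] {C : Set X}
    (hC : IsCompact C) {g : ι → X} (hg : ∀ i, g i ∈ C) {E : V → X → ℝ}
    (hE : Continuous (Function.uncurry E)) (hsmul : ∀ (r : ℝ) v y, E (r • v) y = r * E v y)
    (hne : ∀ v ≠ 0, ∃ i, E v (g i) ≠ 0) :
    ∃ δ > 0, ∀ v ≠ 0, ∃ i, ∀ y ∈ C, dist y (g i) < δ → E v y ≠ 0 := by
  set S := Metric.sphere (0 : V) 1
  have hS : IsCompact S := isCompact_sphere 0 1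
  have hnorm : Continuous fun v => ‖fun i => E v (g i)‖ :=
    (continuous_pi fun i => hE.comp (continuous_id.prodMk continuous_const)).norm
  obtain ⟨m, hm, hmS⟩ := hS.exists_forall_le' hnorm.continuousOn (a := 0) fun u hu => by
    obtain ⟨i, hi⟩ := hne u (ne_zero_of_mem_unit_sphere ⟨u, hu⟩)
    exact (norm_pos_iff.2 hi).trans_le (norm_le_pi_norm (fun i => E u (g i)) i)
  obtain ⟨δ, hδ, hUC⟩ := Metric.uniformContinuousOn_iff.1
    ((hS.prod hC).uniformContinuousOn_of_continuous hE.continuousOn) m hm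
  refine ⟨δ, hδ, fun v hv => ?_⟩
  set u := ‖v‖⁻¹ • v
  have hu : u ∈ S := by simp [S, u, norm_smul, hv]
  obtain ⟨i, hi⟩ : ∃ i, m ≤ |E u (g i)| := by
    by_contra! h
    exact (hmS u hu).not_gt ((pi_norm_lt_iff hm).2 h)
  refine ⟨i, fun y hy hyg hzero => ?_⟩
  have hEu : E u y = 0 := by
    rw [show v = ‖v‖ • u by simp [u, hv], hsmul] at hzero
    simpa [hv] using hzero
  have := hUC (u, y) ⟨hu, hy⟩ (u, g i) ⟨hu, hg i⟩ (by simpa [Prod.dist_eq] using hyg)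
  rw [Real.dist_eq] at this
  simp only [Function.uncurry_apply_pair, hEu, zero_sub, abs_neg] at this
  exact this.not_ge hi

lemma exists_eval_comp_ne_zero_of_degreeOf_le {R σ : Type*} [CommRing R] [IsDomain R] [Finite σ]
    {D : ℕ} {p : MvPolynomial σ R} (hp : p ≠ 0) (hdeg : ∀ i, p.degreeOf i ≤ D)
    {t : Fin (D + 1) → R} (ht : Function.Injective t) :
    ∃ b : σ → Fin (D + 1), eval (t ∘ b) p ≠ 0 := by
  classical
  by_contra! h
  refine hp (eq_zero_of_eval_zero_at_prod_finset p (fun _ => Finset.univ.image t) (fun i => ?_)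
    fun y hy => ?_)
  · rw [Finset.card_image_of_injective _ ht, Finset.card_fin]
    exact Nat.lt_succ_of_le (hdeg i)
  · choose b hb using fun i => Finset.mem_image.1 (hy i)
    simpa [show y = t ∘ b from funext fun i => (hb i).2.symm] using h b

section BoxPoly

variable {R σ : Type*} [CommSemiring R] [Fintype σ] {D : ℕ}

noncomputable def boxExponent (a : σ → Fin (D + 1)) : σ →₀ ℕ :=
  Finsupp.equivFunOnFinite.symm fun i => a i

@[simp]
lemma boxExponent_apply (a : σ → Fin (D + 1)) (i : σ) : boxExponent a i = a i := rfl

lemma boxExponent_injective : Function.Injective (boxExponent : (σ → Fin (D + 1)) → σ →₀ ℕ) :=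
  fun _ _ h => funext fun i => Fin.ext (DFunLike.congr_fun h i)

variable [DecidableEq σ]

variable (R D) in
noncomputable def boxPoly : ((σ → Fin (D + 1)) → R) →ₗ[R] MvPolynomial σ R :=
  Fintype.linearCombination R fun a => monomial (boxExponent a) 1

lemma boxPoly_apply (s : (σ → Fin (D + 1)) → R) :
    boxPoly R D s = ∑ a, monomial (boxExponent a) (s a) := by
  simp [boxPoly, Fintype.linearCombination_apply, smul_monomial]

lemma eval_boxPoly (s : (σ → Fin (D + 1)) → R) (y : σ → R) :
    eval y (boxPoly R D s) = ∑ a, s a * ∏ i, y i ^ (a i : ℕ) := by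
  simp [boxPoly_apply, eval_monomial, Finsupp.prod_fintype]

lemma coeff_boxPoly_boxExponent (s : (σ → Fin (D + 1)) → R) (a : σ → Fin (D + 1)) :
    (boxPoly R D s).coeff (boxExponent a) = s a := by
  rw [boxPoly_apply, coeff_sum, Finset.sum_eq_single a (fun b _ hb => ?_) (by simp)]
  · simp
  · rw [coeff_monomial, if_neg (boxExponent_injective.ne hb)]

lemma coeff_boxPoly_of_lt (s : (σ → Fin (D + 1)) → R) {m : σ →₀ ℕ} {i : σ} (hm : D < m i) :
    (boxPoly R D s).coeff m = 0 := by
  rw [boxPoly_apply, coeff_sum]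
  refine Finset.sum_eq_zero fun a _ => ?_
  rw [coeff_monomial, if_neg]
  rintro rfl
  exact (a i).is_le.not_gt hm

lemma degreeOf_boxPoly_le (s : (σ → Fin (D + 1)) → R) (i : σ) :
    (boxPoly R D s).degreeOf i ≤ D :=
  degreeOf_le_iff.2 fun _ hm => not_lt.1 fun h => mem_support_iff.1 hm (coeff_boxPoly_of_lt s h)

lemma boxPoly_injective : Function.Injective (boxPoly R D : ((σ → Fin (D + 1)) → R) → _) :=
  fun s s' h => funext fun a => by
    rw [← coeff_boxPoly_boxExponent s, h, coeff_boxPoly_boxExponent]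

lemma boxPoly_coeff {p : MvPolynomial σ R} (hp : ∀ i, p.degreeOf i ≤ D) :
    boxPoly R D (fun a => p.coeff (boxExponent a)) = p := by
  ext m
  by_cases hm : ∀ i, m i ≤ D
  · have hm' : boxExponent (fun i => ⟨m i, Nat.lt_succ_of_le (hm i)⟩) = m := by ext; simp
    rw [← hm', coeff_boxPoly_boxExponent]
  · obtain ⟨i, hi⟩ : ∃ i, D < m i := by simpa using hm
    rw [coeff_boxPoly_of_lt _ hi, eq_comm, ← notMem_support_iff]
    exact fun hm => (degreeOf_le_iff.1 (hp i) m hm).not_gt hi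

end BoxPoly

lemma totalDegree_bind₁_le {R σ τ : Type*} [CommSemiring R] {f : σ → MvPolynomial τ R} {k : ℕ}
    (hf : ∀ i, (f i).totalDegree ≤ k) (p : MvPolynomial σ R) :
    (bind₁ f p).totalDegree ≤ p.totalDegree * k := by
  conv_lhs => rw [p.as_sum, map_sum]
  refine (totalDegree_finsetSum _ _).trans (Finset.sup_le fun m hm => ?_)
  rw [bind₁_monomial]
  refine (totalDegree_mul _ _).trans ?_
  rw [totalDegree_C, zero_add]
  refine (totalDegree_finsetProd _ _).trans ?_
  calc ∑ i ∈ m.support, (f i ^ m i).totalDegree ≤ ∑ i ∈ m.support, m i * k :=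
        Finset.sum_le_sum fun i _ => (totalDegree_pow _ _).trans (Nat.mul_le_mul_left _ (hf i))
    _ = (m.sum fun _ e => e) * k := by rw [Finsupp.sum, Finset.sum_mul]
    _ ≤ p.totalDegree * k := Nat.mul_le_mul_right _ (le_totalDegree hm)

lemma eval_bind₁_add_smul {R σ : Type*} [CommRing R] (x : σ → R) (ℓ : R) (z : σ → R)
    (p : MvPolynomial σ R) :
    eval z (bind₁ (fun i => C (x i) + C ℓ * X i) p) = eval (x + ℓ • z) p := by
  rw [show eval z (bind₁ _ p) = eval _ p from aeval_bind₁ z _ p]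
  refine congrArg (eval · p) (funext fun i => ?_)
  simp

lemma totalDegree_bind₁_add_smul_le {R σ : Type*} [CommRing R] (x : σ → R) (ℓ : R)
    (p : MvPolynomial σ R) :
    (bind₁ (fun i => C (x i) + C ℓ * X i) p).totalDegree ≤ p.totalDegree := by
  refine (totalDegree_bind₁_le (k := 1) (fun i => ?_) p).trans_eq (mul_one _)
  refine (totalDegree_add _ _).trans (max_le ?_ ?_)
  · simp
  · rw [C_mul_X_eq_monomial]
    exact (totalDegree_monomial_le _ _).trans_eq (by simp)

lemma exists_forall_dist_lt_eval_ne_zero (d D : ℕ) :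
    ∃ δ > 0, ∀ p : MvPolynomial (Fin d) ℝ, p ≠ 0 → (∀ i, p.degreeOf i ≤ D) →
      ∃ g ∈ Cube 0 1, ∀ y ∈ Cube 0 1, dist y g < δ → eval y p ≠ 0 := by
  have hD : (0 : ℝ) < D + 1 := by positivity
  let t : Fin (D + 1) → ℝ := fun j => j / (D + 1)
  have ht : Function.Injective t := fun j j' h =>
    Fin.ext (by exact_mod_cast (div_left_inj' hD.ne').1 h)
  have ht01 : ∀ b : Fin d → Fin (D + 1), t ∘ b ∈ Cube 0 1 := fun b i => by
    have := (b i).is_lt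
    simp only [Pi.zero_apply, zero_add, Function.comp_apply, t]
    exact ⟨by positivity, (div_le_one₀ hD).2 (by exact_mod_cast this.le)⟩
  obtain ⟨δ, hδ, H⟩ := exists_forall_dist_lt_imp_ne_zero (isCompact_cube 0 1) ht01
    (E := fun s y => eval y (boxPoly ℝ D s)) (by simp only [eval_boxPoly]; fun_prop)
    (by simp) fun s hs => exists_eval_comp_ne_zero_of_degreeOf_le
      ((map_ne_zero_iff _ boxPoly_injective).2 hs) (degreeOf_boxPoly_le s) ht
  refine ⟨δ, hδ, fun p hp hdeg => ?_⟩
  have hs : (fun a => p.coeff (boxExponent a)) ≠ 0 := fun h => hp <| by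
    rw [← boxPoly_coeff hdeg, h, map_zero]
  obtain ⟨b, hb⟩ := H _ hs
  exact ⟨t ∘ b, ht01 b, by simpa only [boxPoly_coeff hdeg] using hb⟩

lemma exists_zero_free_subcube_unit (d D : ℕ) :
    ∃ c > (0 : ℝ), ∀ p : MvPolynomial (Fin d) ℝ, p ≠ 0 → (∀ i, p.degreeOf i ≤ D) →
      ∃ x', Cube x' c ⊆ Cube 0 1 ∧ ∀ y ∈ Cube x' c, eval y p ≠ 0 := by
  obtain ⟨δ, hδ, H⟩ := exists_forall_dist_lt_eval_ne_zero d D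
  obtain ⟨c, hc₀, hcδ, hc₁⟩ : ∃ c : ℝ, 0 < c ∧ c < δ ∧ c ≤ 1 :=
    ⟨min (δ / 2) 1, by positivity, (min_le_left _ _).trans_lt (half_lt_self hδ), min_le_right _ _⟩
  refine ⟨c, hc₀, fun p hp hdeg => ?_⟩
  obtain ⟨g, hg, hne⟩ := H p hp hdeg
  have hsub := cube_shrink_subset hg hc₁
  have hdist := fun y => dist_le_of_mem_cube_shrink (y := y) hg zero_le_one hc₀.le
  simp only [zero_add, sub_zero, mul_one] at hsub hdist
  exact ⟨(1 - c) • g, hsub, fun y hy => hne y (hsub hy) ((hdist y hy).trans_lt hcδ)⟩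

/-- For every `d, D ∈ ℕ` there is `c > 0` such that every nonzero polynomial in `d` real
variables of degree `≤ D` has no zeros on some subcube of proportional side length `c·ℓ_Q`
of any given cube `Q`. -/
theorem stmt_10 (d D : ℕ) :
    ∃ c > (0 : ℝ), ∀ p : MvPolynomial (Fin d) ℝ, p ≠ 0 → p.totalDegree ≤ D →
      ∀ (x : Fin d → ℝ) (ℓ : ℝ), 0 < ℓ →
        ∃ x' : Fin d → ℝ, Cube x' (c * ℓ) ⊆ Cube x ℓ ∧
          ∀ y ∈ Cube x' (c * ℓ), MvPolynomial.eval y p ≠ 0 := by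
  obtain ⟨c, hc, hunit⟩ := exists_zero_free_subcube_unit d D
  refine ⟨c, hc, fun p hp hdeg x ℓ hℓ => ?_⟩
  set q := bind₁ (fun i => C (x i) + C ℓ * X i) p
  have hyx : ∀ y, x + ℓ • ℓ⁻¹ • (y - x) = y := fun y => by
    rw [smul_smul, mul_inv_cancel₀ hℓ.ne', one_smul, add_sub_cancel]
  have hq : q ≠ 0 := fun h => hp <| MvPolynomial.funext fun y => by
    simpa [q, eval_bind₁_add_smul, hyx] using congrArg (eval (ℓ⁻¹ • (y - x))) h
  have hqdeg : ∀ i, q.degreeOf i ≤ D := fun i =>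
    (degreeOf_le_totalDegree q i).trans ((totalDegree_bind₁_add_smul_le x ℓ p).trans hdeg)
  obtain ⟨x', hsub, hne⟩ := hunit q hq hqdeg
  refine ⟨x + ℓ • x', fun y hy => ?_, fun y hy => ?_⟩
  · simpa using (mem_cube_add_smul_iff hℓ (x' := 0) (c := 1)).2
      (hsub ((mem_cube_add_smul_iff hℓ).1 hy))
  · simpa [q, eval_bind₁_add_smul, hyx] using hne _ ((mem_cube_add_smul_iff hℓ).1 hy)
end
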